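/- arXiv:1309.6211 — 5 statements merged into one kernel-verified Lean document; each statement's English description precedes it below -/
import Mathlib

section
/- Let ν : [0,1] → ℝ be continuous and strictly positive, and let f : [0,1] → ℝ be continuously differentiable with f(0) = 0. Then ∫₀¹ |f(x)| ν(x) dx ≤ C · ∫₀¹ |f'(x)| ν(x) dx, where C = max_{0 ≤ x ≤ 1} (1/ν(x)) ∫ₓ¹ ν(z) dz. -/
/-!
Since `f 0 = 0`, `|f x| ≤ ∫₀ˣ |f'|`. Integrating against `ν` and integrating by parts (the primitive
of `|f'|` against the tail integral `x ↦ ∫ₓ¹ ν`) turns `∫₀¹ (∫₀ˣ |f'|) ν(x) dx` into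
`∫₀¹ |f'(t)| (∫ₜ¹ ν) dt`, and the definition of `C` says exactly that `∫ₜ¹ ν ≤ C ν(t)`.
-/

open MeasureTheory Set intervalIntegral

theorem abs_sub_le_integral_abs_deriv {f f' : ℝ → ℝ} {a b : ℝ} (hab : a ≤ b)
    (hf : ∀ x ∈ Icc a b, HasDerivAt f (f' x) x) (hf' : IntervalIntegrable f' volume a b) :
    |f b - f a| ≤ ∫ t in a..b, |f' t| := by
  rw [← integral_eq_sub_of_hasDerivAt (fun x hx ↦ hf x (uIcc_of_le hab ▸ hx)) hf']
  exact abs_integral_le_integral_abs hab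

theorem ContinuousOn.integral_hasDerivAt_right {g : ℝ → ℝ} {a b c x : ℝ}
    (hg : ContinuousOn g (Icc a b)) (hc : c ∈ Icc a b) (hx : x ∈ Ioo a b) :
    HasDerivAt (fun y ↦ ∫ t in c..y, g t) (g x) x :=
  intervalIntegral.integral_hasDerivAt_right
    (hg.mono (uIcc_subset_Icc hc (Ioo_subset_Icc_self hx))).intervalIntegrable
    ((hg.mono Ioo_subset_Icc_self).stronglyMeasurableAtFilter isOpen_Ioo x hx)
    (hg.continuousAt (Icc_mem_nhds hx.1 hx.2))

theorem ContinuousOn.integral_hasDerivAt_left {g : ℝ → ℝ} {a b c x : ℝ}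
    (hg : ContinuousOn g (Icc a b)) (hc : c ∈ Icc a b) (hx : x ∈ Ioo a b) :
    HasDerivAt (fun y ↦ ∫ t in y..c, g t) (-g x) x :=
  intervalIntegral.integral_hasDerivAt_left
    (hg.mono (uIcc_subset_Icc (Ioo_subset_Icc_self hx) hc)).intervalIntegrable
    ((hg.mono Ioo_subset_Icc_self).stronglyMeasurableAtFilter isOpen_Ioo x hx)
    (hg.continuousAt (Icc_mem_nhds hx.1 hx.2))

theorem integral_integral_mul_eq_integral_mul_integral {g ν : ℝ → ℝ} {a b : ℝ} (hab : a ≤ b)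
    (hg : ContinuousOn g (Icc a b)) (hν : ContinuousOn ν (Icc a b)) :
    ∫ x in a..b, (∫ t in a..x, g t) * ν x = ∫ t in a..b, g t * ∫ z in t..b, ν z := by
  have hparts := integral_mul_deriv_eq_deriv_mul_of_hasDerivAt
    (u := fun x ↦ ∫ t in a..x, g t) (v := fun x ↦ ∫ z in x..b, ν z) (u' := g) (v' := fun x ↦ -ν x)
    (continuousOn_primitive_interval (uIcc_of_le hab ▸ hg.integrableOn_Icc))
    (continuousOn_primitive_interval_left (μ := volume) (uIcc_of_le hab ▸ hν.integrableOn_Icc))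
    (fun x hx ↦ hg.integral_hasDerivAt_right (left_mem_Icc.2 hab) (by simpa [hab] using hx))
    (fun x hx ↦ hν.integral_hasDerivAt_left (right_mem_Icc.2 hab) (by simpa [hab] using hx))
    (hg.intervalIntegrable_of_Icc hab) (hν.intervalIntegrable_of_Icc hab).neg
  simp only [integral_same, mul_zero, zero_mul, sub_zero, zero_sub, mul_neg,
    intervalIntegral.integral_neg, neg_inj] at hparts
  exact hparts

/-- Sharp weighted L¹ Poincaré inequality on [0,1] for C¹ functions vanishing at 0. -/
theorem stmt_0 (ν f f' : ℝ → ℝ)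
    (hν : ContinuousOn ν (Icc 0 1)) (hνpos : ∀ x ∈ Icc (0:ℝ) 1, 0 < ν x)
    (hf : ∀ x ∈ Icc (0:ℝ) 1, HasDerivAt f (f' x) x)
    (hf' : ContinuousOn f' (Icc 0 1))
    (hf0 : f 0 = 0)
    (C : ℝ)
    (hC : IsGreatest ((fun x => (1 / ν x) * ∫ z in x..1, ν z) '' Icc 0 1) C) :
    ∫ x in (0:ℝ)..1, |f x| * ν x ≤ C * ∫ x in (0:ℝ)..1, |f' x| * ν x := by
  have hf_le : ∀ x ∈ Icc (0:ℝ) 1, |f x| ≤ ∫ t in (0:ℝ)..x, |f' t| := fun x hx ↦ by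
    have hsub : Icc 0 x ⊆ Icc (0:ℝ) 1 := Icc_subset_Icc_right hx.2
    simpa [hf0] using abs_sub_le_integral_abs_deriv hx.1 (fun t ht ↦ hf t (hsub ht))
      ((hf'.mono hsub).intervalIntegrable_of_Icc hx.1)
  have htail_le : ∀ x ∈ Icc (0:ℝ) 1, ∫ z in x..1, ν z ≤ C * ν x := fun x hx ↦ by
    have : 1 / ν x * ∫ z in x..1, ν z ≤ C := hC.2 ⟨x, hx, rfl⟩
    rwa [one_div, inv_mul_le_iff₀ (hνpos x hx), mul_comm] at this
  have hfc : ContinuousOn f (Icc 0 1) := fun x hx ↦ (hf x hx).continuousAt.continuousWithinAt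
  have h01 : uIcc (0:ℝ) 1 = Icc 0 1 := uIcc_of_le zero_le_one
  have hprim : ContinuousOn (fun x ↦ ∫ t in (0:ℝ)..x, |f' t|) (Icc 0 1) := by
    rw [← h01]; exact continuousOn_primitive_interval (h01 ▸ hf'.abs.integrableOn_Icc)
  have htail : ContinuousOn (fun x ↦ ∫ z in x..1, ν z) (Icc 0 1) := by
    rw [← h01]; exact continuousOn_primitive_interval_left (h01 ▸ hν.integrableOn_Icc)
  calc ∫ x in (0:ℝ)..1, |f x| * ν x
      ≤ ∫ x in (0:ℝ)..1, (∫ t in (0:ℝ)..x, |f' t|) * ν x :=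
        integral_mono_on zero_le_one ((hfc.abs.mul hν).intervalIntegrable_of_Icc zero_le_one)
          ((hprim.mul hν).intervalIntegrable_of_Icc zero_le_one)
          fun x hx ↦ mul_le_mul_of_nonneg_right (hf_le x hx) (hνpos x hx).le
    _ = ∫ t in (0:ℝ)..1, |f' t| * ∫ z in t..1, ν z :=
        integral_integral_mul_eq_integral_mul_integral zero_le_one hf'.abs hν
    _ ≤ ∫ t in (0:ℝ)..1, |f' t| * (C * ν t) :=
        integral_mono_on zero_le_one ((hf'.abs.mul htail).intervalIntegrable_of_Icc zero_le_one)
          ((hf'.abs.mul (continuousOn_const.mul hν)).intervalIntegrable_of_Icc zero_le_one)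
          fun t ht ↦ mul_le_mul_of_nonneg_left (htail_le t ht) (abs_nonneg _)
    _ = C * ∫ x in (0:ℝ)..1, |f' x| * ν x := by
        rw [← intervalIntegral.integral_const_mul]
        simp only [mul_left_comm]
end

section
/- Let ν : [0,1] → ℝ be continuous and strictly positive. The constant C = max_{0 ≤ x ≤ 1} (1/ν(x)) ∫ₓ¹ ν(z) dz in the weighted Poincaré inequality ∫₀¹ |f| ν ≤ C ∫₀¹ |f'| ν (for C¹ functions f with f(0)=0) is sharp: for every ε > 0 there exists a C¹ function f with f(0) = 0 and ∫₀¹ |f(x)| ν(x) dx > (C − ε) ∫₀¹ |f'(x)| ν(x) dx. -/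
open MeasureTheory Set intervalIntegral

set_option maxHeartbeats 1000000 in
/-- Sharpness of the constant in the weighted L¹ Poincaré inequality for
functions vanishing at 0. -/
theorem stmt_1 (ν : ℝ → ℝ)
    (hν : ContinuousOn ν (Icc 0 1)) (hνpos : ∀ x ∈ Icc (0:ℝ) 1, 0 < ν x)
    (C : ℝ)
    (hC : IsGreatest ((fun x => (1 / ν x) * ∫ z in x..1, ν z) '' Icc 0 1) C)
    (ε : ℝ) (hε : 0 < ε) :
    ∃ f f' : ℝ → ℝ,
      (∀ x ∈ Icc (0:ℝ) 1, HasDerivAt f (f' x) x) ∧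
      ContinuousOn f' (Icc 0 1) ∧
      f 0 = 0 ∧
      (∫ x in (0:ℝ)..1, |f x| * ν x) > (C - ε) * ∫ x in (0:ℝ)..1, |f' x| * ν x := by
  -- integrability of ν on subintervals of [0,1]
  have hνint : ∀ a b : ℝ, a ∈ Icc (0:ℝ) 1 → b ∈ Icc (0:ℝ) 1 →
      IntervalIntegrable ν MeasureTheory.volume a b := by
    intro a b ha hb
    exact (hν.mono (uIcc_subset_Icc ha hb)).intervalIntegrable
  have h0mem : (0:ℝ) ∈ Icc (0:ℝ) 1 := ⟨le_refl _, zero_le_one⟩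
  have h1mem : (1:ℝ) ∈ Icc (0:ℝ) 1 := ⟨zero_le_one, le_refl _⟩
  -- C is positive
  have hC0 : 0 < C := by
    have hle : (1 / ν 0) * ∫ z in (0:ℝ)..1, ν z ≤ C := hC.2 ⟨0, h0mem, rfl⟩
    have hIpos : 0 < ∫ z in (0:ℝ)..1, ν z :=
      intervalIntegral.intervalIntegral_pos_of_pos_on (hνint 0 1 h0mem h1mem)
        (fun x hx => hνpos x ⟨hx.1.le, hx.2.le⟩) one_pos
    have hν0 := hνpos 0 h0mem
    have : 0 < (1 / ν 0) * ∫ z in (0:ℝ)..1, ν z := by positivity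
    linarith
  obtain ⟨x₀, hx₀mem, hx₀⟩ := hC.1
  simp only [] at hx₀
  obtain ⟨ν₀, hν₀def⟩ : ∃ v : ℝ, v = ν x₀ := ⟨_, rfl⟩
  have hν₀ : 0 < ν₀ := hν₀def ▸ hνpos x₀ hx₀mem
  have hx₀1 : x₀ < 1 := by
    rcases lt_or_eq_of_le hx₀mem.2 with h | h
    · exact h
    · exfalso
      rw [h] at hx₀
      simp [intervalIntegral.integral_same] at hx₀
      linarith
  have hCν₀ : (∫ z in x₀..1, ν z) = C * ν₀ := by
    rw [hν₀def]
    have hne : ν x₀ ≠ 0 := (hν₀def ▸ hν₀).ne'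
    field_simp at hx₀
    linarith
  -- reduce ε
  obtain ⟨ε', hε'def⟩ : ∃ e : ℝ, e = min ε (C / 2) := ⟨_, rfl⟩
  have hε'pos : 0 < ε' := hε'def ▸ lt_min hε (by linarith)
  have hε'le : ε' ≤ ε := hε'def ▸ min_le_left _ _
  have hε'C : ε' < C := lt_of_le_of_lt (hε'def ▸ min_le_right ε (C/2)) (by linarith)
  obtain ⟨κ, hκdef⟩ : ∃ k : ℝ, k = ε' * ν₀ / (2 * C) := ⟨_, rfl⟩
  have hκpos : 0 < κ := by rw [hκdef]; positivity
  have hκC : κ * C = ε' * ν₀ / 2 := by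
    rw [hκdef]; field_simp
  -- continuity of ν at x₀
  have hcont := hν x₀ hx₀mem
  rw [Metric.continuousWithinAt_iff] at hcont
  obtain ⟨δ₀, hδ₀, hball⟩ := hcont κ hκpos
  obtain ⟨δ, hδdef⟩ : ∃ d : ℝ, d = min (min (δ₀ / 2) (1 - x₀)) (ε' * ν₀ / (4 * (ν₀ + κ))) :=
    ⟨_, rfl⟩
  have hδpos : 0 < δ := by
    rw [hδdef]
    apply lt_min (lt_min (by linarith) (by linarith))
    positivity
  have hδδ₀ : δ < δ₀ := by
    have h : δ ≤ δ₀ / 2 := hδdef ▸ le_trans (min_le_left _ _) (min_le_left (δ₀/2) (1 - x₀))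
    linarith
  have hδ1 : x₀ + δ ≤ 1 := by
    have h : δ ≤ 1 - x₀ := hδdef ▸ le_trans (min_le_left _ _) (min_le_right (δ₀/2) (1 - x₀))
    linarith
  have hδsmall : δ * (ν₀ + κ) ≤ ε' * ν₀ / 4 := by
    have h : δ ≤ ε' * ν₀ / (4 * (ν₀ + κ)) := hδdef ▸ min_le_right _ _
    have hpos : 0 < ν₀ + κ := by linarith
    calc δ * (ν₀ + κ) ≤ (ε' * ν₀ / (4 * (ν₀ + κ))) * (ν₀ + κ) := by nlinarith
      _ = ε' * ν₀ / 4 := by field_simp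
  -- the bump function
  obtain ⟨g, hgdef⟩ : ∃ gg : ℝ → ℝ, gg = fun t => max 0 (δ / 2 - |t - (x₀ + δ / 2)|) := ⟨_, rfl⟩
  have hgc : Continuous g := by
    rw [hgdef]
    exact continuous_const.max (continuous_const.sub (continuous_id.sub continuous_const).abs)
  have hgnn : ∀ t, 0 ≤ g t := fun t => hgdef ▸ le_max_left _ _
  have hg0 : ∀ t : ℝ, t ≤ x₀ ∨ x₀ + δ ≤ t → g t = 0 := by
    intro t ht
    have h : δ / 2 - |t - (x₀ + δ / 2)| ≤ 0 := by
      rcases ht with h | h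
      · have h1 : x₀ + δ / 2 - t ≤ |t - (x₀ + δ / 2)| := by rw [abs_sub_comm]; exact le_abs_self _
        linarith
      · have h1 : t - (x₀ + δ / 2) ≤ |t - (x₀ + δ / 2)| := le_abs_self _
        linarith
    rw [hgdef]
    exact max_eq_left h
  have hgpos : ∀ t ∈ Ioo x₀ (x₀ + δ), 0 < g t := by
    intro t ht
    have h : |t - (x₀ + δ / 2)| < δ / 2 := by
      rw [abs_lt]
      constructor
      · linarith [ht.1]
      · linarith [ht.2]
    have h2 : 0 < δ / 2 - |t - (x₀ + δ / 2)| := by linarith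
    rw [hgdef]
    exact lt_max_of_lt_right h2
  have hgne : ∀ t : ℝ, g t ≠ 0 → t ∈ Ioo x₀ (x₀ + δ) := by
    intro t ht
    by_contra hmem
    apply ht
    apply hg0
    rcases le_or_gt t x₀ with h | h
    · exact Or.inl h
    rcases le_or_gt (x₀ + δ) t with h2 | h2
    · exact Or.inr h2
    · exact absurd ⟨h, h2⟩ hmem
  -- the function f
  obtain ⟨f, hfdef⟩ : ∃ ff : ℝ → ℝ, ff = fun x => ∫ s in (0:ℝ)..x, g s := ⟨_, rfl⟩
  have hderiv : ∀ x : ℝ, HasDerivAt f (g x) x := by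
    intro x
    rw [hfdef]
    exact intervalIntegral.integral_hasDerivAt_right (hgc.intervalIntegrable 0 x)
      hgc.stronglyMeasurable.stronglyMeasurableAtFilter hgc.continuousAt
  have hfc : Continuous f := by
    rw [continuous_iff_continuousAt]; exact fun x => (hderiv x).continuousAt
  have hf0 : f 0 = 0 := by rw [hfdef]; exact intervalIntegral.integral_same
  -- the mass A
  obtain ⟨A, hAdef⟩ : ∃ a : ℝ, a = f (x₀ + δ) := ⟨_, rfl⟩
  have hApos : 0 < A := by
    have hsplit : (∫ s in (0:ℝ)..x₀, g s) + ∫ s in x₀..(x₀+δ), g s = ∫ s in (0:ℝ)..(x₀+δ), g s :=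
      intervalIntegral.integral_add_adjacent_intervals (hgc.intervalIntegrable _ _)
        (hgc.intervalIntegrable _ _)
    have h1 : (∫ s in (0:ℝ)..x₀, g s) = 0 := by
      rw [intervalIntegral.integral_congr (g := fun _ => (0:ℝ)), intervalIntegral.integral_zero]
      intro t ht
      rw [uIcc_of_le hx₀mem.1] at ht
      exact hg0 t (Or.inl ht.2)
    have h2 : 0 < ∫ s in x₀..(x₀+δ), g s :=
      intervalIntegral.intervalIntegral_pos_of_pos_on (hgc.intervalIntegrable _ _)
        hgpos (by linarith)
    rw [hAdef, hfdef]
    dsimp only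
    linarith
  -- f = A on [x₀ + δ, ∞)
  have hfA : ∀ t : ℝ, x₀ + δ ≤ t → f t = A := by
    intro t ht
    have hsplit : (∫ s in (0:ℝ)..(x₀+δ), g s) + ∫ s in (x₀+δ)..t, g s = ∫ s in (0:ℝ)..t, g s :=
      intervalIntegral.integral_add_adjacent_intervals (hgc.intervalIntegrable _ _)
        (hgc.intervalIntegrable _ _)
    have h2 : (∫ s in (x₀+δ)..t, g s) = 0 := by
      rw [intervalIntegral.integral_congr (g := fun _ => (0:ℝ)), intervalIntegral.integral_zero]
      intro s hs
      rw [uIcc_of_le ht] at hs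
      exact hg0 s (Or.inr hs.1)
    rw [hAdef, hfdef]
    dsimp only
    linarith
  -- integrability facts
  have hfνcont : ContinuousOn (fun x => |f x| * ν x) (Icc 0 1) :=
    (hfc.abs.continuousOn).mul hν
  have hgνcont : ContinuousOn (fun x => |g x| * ν x) (Icc 0 1) :=
    (hgc.abs.continuousOn).mul hν
  have hfνint : ∀ a b : ℝ, a ∈ Icc (0:ℝ) 1 → b ∈ Icc (0:ℝ) 1 →
      IntervalIntegrable (fun x => |f x| * ν x) MeasureTheory.volume a b := by
    intro a b ha hb
    exact (hfνcont.mono (uIcc_subset_Icc ha hb)).intervalIntegrable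
  have hxδmem : x₀ + δ ∈ Icc (0:ℝ) 1 := ⟨by linarith [hx₀mem.1], hδ1⟩
  -- lower bound for LHS
  have hLHS : A * (∫ z in (x₀+δ)..1, ν z) ≤ ∫ x in (0:ℝ)..1, |f x| * ν x := by
    have hsplit : (∫ x in (0:ℝ)..(x₀+δ), |f x| * ν x) + ∫ x in (x₀+δ)..1, |f x| * ν x
        = ∫ x in (0:ℝ)..1, |f x| * ν x :=
      intervalIntegral.integral_add_adjacent_intervals (hfνint _ _ h0mem hxδmem)
        (hfνint _ _ hxδmem h1mem)
    have h1 : 0 ≤ ∫ x in (0:ℝ)..(x₀+δ), |f x| * ν x := by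
      apply intervalIntegral.integral_nonneg (by linarith [hx₀mem.1])
      intro u hu
      have : 0 < ν u := hνpos u ⟨hu.1, le_trans hu.2 hδ1⟩
      positivity
    have h2 : (∫ x in (x₀+δ)..1, |f x| * ν x) = A * ∫ z in (x₀+δ)..1, ν z := by
      rw [← intervalIntegral.integral_const_mul]
      apply intervalIntegral.integral_congr
      intro t ht
      rw [uIcc_of_le hδ1] at ht
      show |f t| * ν t = A * ν t
      rw [hfA t ht.1, abs_of_pos hApos]
    linarith
  -- upper bound for RHS
  have hgtot : (∫ s in (0:ℝ)..1, g s) = A := by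
    have hsplit : (∫ s in (0:ℝ)..(x₀+δ), g s) + ∫ s in (x₀+δ)..1, g s = ∫ s in (0:ℝ)..1, g s :=
      intervalIntegral.integral_add_adjacent_intervals (hgc.intervalIntegrable _ _)
        (hgc.intervalIntegrable _ _)
    have h2 : (∫ s in (x₀+δ)..1, g s) = 0 := by
      rw [intervalIntegral.integral_congr (g := fun _ => (0:ℝ)), intervalIntegral.integral_zero]
      intro s hs
      rw [uIcc_of_le hδ1] at hs
      exact hg0 s (Or.inr hs.1)
    rw [hAdef, hfdef]
    dsimp only
    linarith
  have hRHS : (∫ x in (0:ℝ)..1, |g x| * ν x) ≤ (ν₀ + κ) * A := by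
    have hb : ∀ t ∈ Icc (0:ℝ) 1, |g t| * ν t ≤ g t * (ν₀ + κ) := by
      intro t ht
      rw [abs_of_nonneg (hgnn t)]
      by_cases h : g t = 0
      · simp [h]
      · have htIoo := hgne t h
        have htd : dist t x₀ < δ₀ := by
          rw [Real.dist_eq, abs_lt]
          constructor
          · linarith [htIoo.1]
          · linarith [htIoo.2]
        have hν_close := hball ⟨by linarith [htIoo.1, hx₀mem.1], by linarith [htIoo.2]⟩ htd
        rw [Real.dist_eq, abs_lt, ← hν₀def] at hν_close
        have hle : ν t ≤ ν₀ + κ := by linarith [hν_close.2]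
        exact mul_le_mul_of_nonneg_left hle (hgnn t)
    have hmono : (∫ x in (0:ℝ)..1, |g x| * ν x) ≤ ∫ x in (0:ℝ)..1, g x * (ν₀ + κ) := by
      apply intervalIntegral.integral_mono_on zero_le_one
        ((hgνcont.mono (by rw [uIcc_of_le zero_le_one])).intervalIntegrable)
        ((hgc.mul continuous_const).intervalIntegrable _ _) hb
    have hInt : (∫ x in (0:ℝ)..1, g x * (ν₀ + κ)) = (ν₀ + κ) * A := by
      rw [intervalIntegral.integral_mul_const, hgtot]; ring
    linarith
  have hRHSnn : 0 ≤ ∫ x in (0:ℝ)..1, |g x| * ν x := by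
    apply intervalIntegral.integral_nonneg zero_le_one
    intro u hu
    have : 0 < ν u := hνpos u hu
    positivity
  -- the tail integral bound
  have htail : C * ν₀ - δ * (ν₀ + κ) ≤ ∫ z in (x₀+δ)..1, ν z := by
    have hsplit : (∫ z in x₀..(x₀+δ), ν z) + ∫ z in (x₀+δ)..1, ν z = ∫ z in x₀..1, ν z :=
      intervalIntegral.integral_add_adjacent_intervals (hνint _ _ hx₀mem hxδmem)
        (hνint _ _ hxδmem h1mem)
    have hb : (∫ z in x₀..(x₀+δ), ν z) ≤ δ * (ν₀ + κ) := by
      have hmono : (∫ z in x₀..(x₀+δ), ν z) ≤ ∫ _z in x₀..(x₀+δ), (ν₀ + κ) := by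
        apply intervalIntegral.integral_mono_on (by linarith)
          (hνint _ _ hx₀mem hxδmem) intervalIntegrable_const
        intro t ht
        have htd : dist t x₀ < δ₀ := by
          rw [Real.dist_eq, abs_lt]
          constructor
          · linarith [ht.1]
          · linarith [ht.2]
        have hν_close := hball ⟨by linarith [ht.1, hx₀mem.1], by linarith [ht.2, hδ1]⟩ htd
        rw [Real.dist_eq, abs_lt, ← hν₀def] at hν_close
        linarith [hν_close.2]
      rw [intervalIntegral.integral_const, smul_eq_mul,
        show x₀ + δ - x₀ = δ by ring] at hmono
      exact hmono
    linarith [hCν₀]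
  -- conclude
  refine ⟨f, g, fun x _ => hderiv x, hgc.continuousOn, hf0, ?_⟩
  have key : (C - ε') * (ν₀ + κ) < C * ν₀ - δ * (ν₀ + κ) := by
    nlinarith [hκC, hδsmall, mul_pos hε'pos hκpos, mul_pos hε'pos hν₀]
  have h1 : (C - ε') * ((ν₀ + κ) * A) < A * (C * ν₀ - δ * (ν₀ + κ)) := by
    calc (C - ε') * ((ν₀ + κ) * A) = A * ((C - ε') * (ν₀ + κ)) := by ring
      _ < A * (C * ν₀ - δ * (ν₀ + κ)) := by
          exact mul_lt_mul_of_pos_left key hApos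
  have h2 : (C - ε) * (∫ x in (0:ℝ)..1, |g x| * ν x)
      ≤ (C - ε') * (∫ x in (0:ℝ)..1, |g x| * ν x) :=
    mul_le_mul_of_nonneg_right (by linarith) hRHSnn
  have h3 : (C - ε') * (∫ x in (0:ℝ)..1, |g x| * ν x) ≤ (C - ε') * ((ν₀ + κ) * A) :=
    mul_le_mul_of_nonneg_left hRHS (by linarith)
  have h4 : A * (C * ν₀ - δ * (ν₀ + κ)) ≤ A * ∫ z in (x₀+δ)..1, ν z :=
    mul_le_mul_of_nonneg_left htail hApos.le
  calc (C - ε) * (∫ x in (0:ℝ)..1, |g x| * ν x)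
      ≤ (C - ε') * ((ν₀ + κ) * A) := le_trans h2 h3
    _ < A * (C * ν₀ - δ * (ν₀ + κ)) := h1
    _ ≤ A * ∫ z in (x₀+δ)..1, ν z := h4
    _ ≤ _ := hLHS
end

section
/- Let ν : [0,1] → ℝ be continuous and strictly positive, and let f : [0,1] → ℝ be continuously differentiable with weighted mean zero, ∫₀¹ f(x) ν(x) dx = 0. Then ∫₀¹ |f(x)| ν(x) dx ≤ C ∫₀¹ |f'(x)| ν(x) dx, where C = max_{0 ≤ x ≤ 1} (2/ν(x)) · (∫₀ˣ ν)(∫ₓ¹ ν) / (∫₀¹ ν). -/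
open MeasureTheory Set intervalIntegral

/-- Sharp weighted L¹ Poincaré inequality on [0,1] for C¹ functions with
weighted mean zero. -/
theorem stmt_2 (ν f f' : ℝ → ℝ)
    (hν : ContinuousOn ν (Icc 0 1)) (hνpos : ∀ x ∈ Icc (0:ℝ) 1, 0 < ν x)
    (hf : ∀ x ∈ Icc (0:ℝ) 1, HasDerivAt f (f' x) x)
    (hf' : ContinuousOn f' (Icc 0 1))
    (hmean : ∫ x in (0:ℝ)..1, f x * ν x = 0)
    (C : ℝ)
    (hC : IsGreatest
      ((fun x => (2 / ν x) *
        ((∫ z in (0:ℝ)..x, ν z) * (∫ z in x..1, ν z)) / (∫ z in (0:ℝ)..1, ν z)) ''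
        Icc 0 1) C) :
    ∫ x in (0:ℝ)..1, |f x| * ν x ≤ C * ∫ x in (0:ℝ)..1, |f' x| * ν x := by
  -- continuous extensions of ν and f' to all of ℝ
  set g : ℝ → ℝ := fun x => ν (projIcc (0:ℝ) 1 zero_le_one x) with hg_def
  set h : ℝ → ℝ := fun x => f' (projIcc (0:ℝ) 1 zero_le_one x) with hh_def
  have hproj : ∀ x : ℝ, ((projIcc (0:ℝ) 1 zero_le_one x : Icc (0:ℝ) 1) : ℝ) ∈ Icc (0:ℝ) 1 :=
    fun x => (projIcc (0:ℝ) 1 zero_le_one x).2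
  have hgcont : Continuous g :=
    hν.comp_continuous (continuous_subtype_val.comp continuous_projIcc) hproj
  have hhcont : Continuous h :=
    hf'.comp_continuous (continuous_subtype_val.comp continuous_projIcc) hproj
  have hgeq : ∀ x ∈ Icc (0:ℝ) 1, g x = ν x := fun x hx => by
    simp [hg_def, projIcc_of_mem zero_le_one hx]
  have hheq : ∀ x ∈ Icc (0:ℝ) 1, h x = f' x := fun x hx => by
    simp [hh_def, projIcc_of_mem zero_le_one hx]
  have hgpos : ∀ x : ℝ, 0 < g x := fun x => hνpos _ (hproj x)
  -- primitives
  set A : ℝ → ℝ := fun x => ∫ z in (0:ℝ)..x, g z with hA_def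
  set N : ℝ := A 1 with hN_def
  set B : ℝ → ℝ := fun x => ∫ z in x..1, g z with hB_def
  have hgint : ∀ a b : ℝ, IntervalIntegrable g volume a b :=
    fun a b => hgcont.intervalIntegrable a b
  have hABN : ∀ x : ℝ, A x + B x = N := fun x =>
    integral_add_adjacent_intervals (hgint 0 x) (hgint x 1)
  have hAderiv : ∀ x : ℝ, HasDerivAt A (g x) x := fun x =>
    integral_hasDerivAt_right (hgint 0 x)
      (hgcont.stronglyMeasurableAtFilter volume (nhds x)) hgcont.continuousAt
  have hAcont : Continuous A := by
    rw [continuous_iff_continuousAt]; exact fun x => (hAderiv x).continuousAt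
  have hBcont : Continuous B := by
    have : B = fun x => N - A x := funext fun x => by linarith [hABN x]
    rw [this]; exact continuous_const.sub hAcont
  have hAnn : ∀ x : ℝ, 0 ≤ x → 0 ≤ A x := fun x hx =>
    intervalIntegral.integral_nonneg hx (fun t _ => (hgpos t).le)
  have hBnn : ∀ x : ℝ, x ≤ 1 → 0 ≤ B x := fun x hx =>
    intervalIntegral.integral_nonneg hx (fun t _ => (hgpos t).le)
  have hNpos : 0 < N :=
    intervalIntegral.intervalIntegral_pos_of_pos (hgint 0 1) hgpos one_pos
  -- iterated primitives for a general continuous integrand φ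
  -- key computations done uniformly for φ = h and φ = |h|
  have key : ∀ φ : ℝ → ℝ, Continuous φ →
      (∫ x in (0:ℝ)..1, (∫ t in (0:ℝ)..x, φ t * A t) * g x)
        = ∫ t in (0:ℝ)..1, φ t * A t * B t := by
    intro φ hφ
    have hcont : Continuous fun t => φ t * A t := hφ.mul hAcont
    have hint : ∀ a b : ℝ, IntervalIntegrable (fun t => φ t * A t) volume a b :=
      fun a b => hcont.intervalIntegrable a b
    have hu : ∀ x : ℝ, HasDerivAt (fun x => ∫ t in (0:ℝ)..x, φ t * A t) (φ x * A x) x :=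
      fun x => integral_hasDerivAt_right (hint 0 x)
        (hcont.stronglyMeasurableAtFilter volume (nhds x)) hcont.continuousAt
    have hv : ∀ x : ℝ, HasDerivAt (fun x => A x - N) (g x) x := fun x => (hAderiv x).sub_const N
    have := integral_mul_deriv_eq_deriv_mul
      (u := fun x => ∫ t in (0:ℝ)..x, φ t * A t) (v := fun x => A x - N)
      (u' := fun x => φ x * A x) (v' := g)
      (fun x _ => hu x) (fun x _ => hv x) (hint 0 1) (hgint 0 1)
    have hA0 : A 0 = 0 := integral_same
    have hW0 : (∫ t in (0:ℝ)..(0:ℝ), φ t * A t) = 0 := integral_same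
    simp only [hW0, hA0, ← hN_def, sub_self, mul_zero, zero_mul, zero_sub, sub_zero] at this
    rw [this]
    rw [← intervalIntegral.integral_neg]
    apply intervalIntegral.integral_congr
    intro t _
    have : B t = N - A t := by linarith [hABN t]
    simp only [this]
    ring
  have key2 : ∀ φ : ℝ → ℝ, Continuous φ →
      (∫ x in (0:ℝ)..1, (∫ t in (0:ℝ)..x, φ t * B t) * g x)
        = (∫ t in (0:ℝ)..1, φ t * B t) * N - ∫ t in (0:ℝ)..1, φ t * A t * B t := by
    intro φ hφ
    have hcont : Continuous fun t => φ t * B t := hφ.mul hBcont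
    have hint : ∀ a b : ℝ, IntervalIntegrable (fun t => φ t * B t) volume a b :=
      fun a b => hcont.intervalIntegrable a b
    have hu : ∀ x : ℝ, HasDerivAt (fun x => ∫ t in (0:ℝ)..x, φ t * B t) (φ x * B x) x :=
      fun x => integral_hasDerivAt_right (hint 0 x)
        (hcont.stronglyMeasurableAtFilter volume (nhds x)) hcont.continuousAt
    have := integral_mul_deriv_eq_deriv_mul
      (u := fun x => ∫ t in (0:ℝ)..x, φ t * B t) (v := A)
      (u' := fun x => φ x * B x) (v' := g)
      (fun x _ => hu x) (fun x _ => hAderiv x) (hint 0 1) (hgint 0 1)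
    have hA0 : A 0 = 0 := integral_same
    have hW0 : (∫ t in (0:ℝ)..(0:ℝ), φ t * B t) = 0 := integral_same
    simp only [hW0, hA0, ← hN_def, mul_zero, zero_mul, sub_zero] at this
    rw [this]
    congr 1
    apply intervalIntegral.integral_congr
    intro t _
    ring
  -- the fundamental identity:  N * f x = ∫₀ˣ h A - ∫ₓ¹ h B on [0,1]
  have hhAcont : Continuous fun t => h t * A t := hhcont.mul hAcont
  have hhBcont : Continuous fun t => h t * B t := hhcont.mul hBcont
  have hhAint : ∀ a b : ℝ, IntervalIntegrable (fun t => h t * A t) volume a b :=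
    fun a b => hhAcont.intervalIntegrable a b
  have hhBint : ∀ a b : ℝ, IntervalIntegrable (fun t => h t * B t) volume a b :=
    fun a b => hhBcont.intervalIntegrable a b
  set u₁ : ℝ → ℝ := fun x => ∫ t in (0:ℝ)..x, h t * A t with hu₁_def
  set w₁ : ℝ → ℝ := fun x => ∫ t in (0:ℝ)..x, h t * B t with hw₁_def
  have hu₁ : ∀ x : ℝ, HasDerivAt u₁ (h x * A x) x := fun x =>
    integral_hasDerivAt_right (hhAint 0 x)
      (hhAcont.stronglyMeasurableAtFilter volume (nhds x)) hhAcont.continuousAt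
  have hw₁ : ∀ x : ℝ, HasDerivAt w₁ (h x * B x) x := fun x =>
    integral_hasDerivAt_right (hhBint 0 x)
      (hhBcont.stronglyMeasurableAtFilter volume (nhds x)) hhBcont.continuousAt
  set Φ : ℝ → ℝ := fun x => u₁ x + w₁ x - w₁ 1 - N * f x with hΦ_def
  have hΦderiv : ∀ x ∈ Icc (0:ℝ) 1, HasDerivAt Φ 0 x := by
    intro x hx
    have hd : HasDerivAt Φ (h x * A x + h x * B x - N * f' x) x :=
      (((hu₁ x).add (hw₁ x)).sub_const (w₁ 1)).sub ((hf x hx).const_mul N)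
    have : h x * A x + h x * B x - N * f' x = 0 := by
      rw [hheq x hx]; linear_combination f' x * hABN x
    rwa [this] at hd
  have hΦconst : ∀ x ∈ Icc (0:ℝ) 1, Φ x = Φ 0 :=
    constant_of_has_deriv_right_zero
      (fun x hx => (hΦderiv x hx).continuousAt.continuousWithinAt)
      (fun x hx => (hΦderiv x ⟨hx.1, hx.2.le⟩).hasDerivWithinAt)
  -- ∫ Φ g = 0, hence Φ ≡ 0
  have hfg0 : (∫ x in (0:ℝ)..1, f x * g x) = 0 := by
    have e : (∫ x in (0:ℝ)..1, f x * g x) = ∫ x in (0:ℝ)..1, f x * ν x := by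
      apply intervalIntegral.integral_congr
      intro x hx
      rw [uIcc_of_le zero_le_one] at hx
      simp only [hgeq x hx]
    exact e.trans hmean
  have hfcont : ContinuousOn f (Icc 0 1) := fun x hx => (hf x hx).continuousAt.continuousWithinAt
  have hu₁cont : Continuous u₁ := by
    rw [continuous_iff_continuousAt]; exact fun x => (hu₁ x).continuousAt
  have hw₁cont : Continuous w₁ := by
    rw [continuous_iff_continuousAt]; exact fun x => (hw₁ x).continuousAt
  have hΦint : (∫ x in (0:ℝ)..1, Φ x * g x) = 0 := by
    have I1 : IntervalIntegrable (fun x => u₁ x * g x) volume 0 1 :=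
      (hu₁cont.mul hgcont).intervalIntegrable 0 1
    have I2 : IntervalIntegrable (fun x => w₁ x * g x) volume 0 1 :=
      (hw₁cont.mul hgcont).intervalIntegrable 0 1
    have I3 : IntervalIntegrable (fun x => w₁ 1 * g x) volume 0 1 :=
      (continuous_const.mul hgcont).intervalIntegrable 0 1
    have I4 : IntervalIntegrable (fun x => N * (f x * g x)) volume 0 1 := by
      apply ContinuousOn.intervalIntegrable
      rw [uIcc_of_le zero_le_one]
      exact continuousOn_const.mul (hfcont.mul hgcont.continuousOn)
    have I12 : IntervalIntegrable (fun x => u₁ x * g x + w₁ x * g x) volume 0 1 := I1.add I2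
    have I123 : IntervalIntegrable (fun x => u₁ x * g x + w₁ x * g x - w₁ 1 * g x) volume 0 1 :=
      I12.sub I3
    have e0 : (∫ x in (0:ℝ)..1, Φ x * g x)
        = ∫ x in (0:ℝ)..1, (u₁ x * g x + w₁ x * g x - w₁ 1 * g x - N * (f x * g x)) := by
      apply intervalIntegral.integral_congr
      intro x _
      simp only [hΦ_def]
      ring
    have eg : (∫ x in (0:ℝ)..1, g x) = N := rfl
    have ew : (∫ t in (0:ℝ)..1, h t * B t) = w₁ 1 := rfl
    rw [e0, intervalIntegral.integral_sub I123 I4, intervalIntegral.integral_sub I12 I3,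
      intervalIntegral.integral_add I1 I2, intervalIntegral.integral_const_mul,
      intervalIntegral.integral_const_mul, key h hhcont, key2 h hhcont, hfg0, eg, ew]
    ring
  have hΦ0 : Φ 0 = 0 := by
    have e : (∫ x in (0:ℝ)..1, Φ x * g x) = Φ 0 * N := by
      have e' : (∫ x in (0:ℝ)..1, Φ x * g x) = ∫ x in (0:ℝ)..1, Φ 0 * g x := by
        apply intervalIntegral.integral_congr
        intro x hx
        rw [uIcc_of_le zero_le_one] at hx
        simp only [hΦconst x hx]
      have eg : (∫ x in (0:ℝ)..1, g x) = N := rfl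
      rw [e', intervalIntegral.integral_const_mul, eg]
    rw [hΦint] at e
    rcases mul_eq_zero.mp e.symm with h0 | h0
    · exact h0
    · exact absurd h0 (ne_of_gt hNpos)
  have hident : ∀ x ∈ Icc (0:ℝ) 1, N * f x = u₁ x + w₁ x - w₁ 1 := by
    intro x hx
    have := hΦconst x hx
    rw [hΦ0] at this
    simp only [hΦ_def] at this
    linarith
  -- the pointwise bound with |h|
  have habscont : Continuous fun t => |h t| := hhcont.abs
  have hAabs : Continuous fun t => |h t| * A t := habscont.mul hAcont
  have hBabs : Continuous fun t => |h t| * B t := habscont.mul hBcont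
  set u₂ : ℝ → ℝ := fun x => ∫ t in (0:ℝ)..x, |h t| * A t with hu₂_def
  set w₂ : ℝ → ℝ := fun x => ∫ t in (0:ℝ)..x, |h t| * B t with hw₂_def
  have hu₂ : ∀ x : ℝ, HasDerivAt u₂ (|h x| * A x) x := fun x =>
    integral_hasDerivAt_right (hAabs.intervalIntegrable 0 x)
      (hAabs.stronglyMeasurableAtFilter volume (nhds x)) hAabs.continuousAt
  have hw₂ : ∀ x : ℝ, HasDerivAt w₂ (|h x| * B x) x := fun x =>
    integral_hasDerivAt_right (hBabs.intervalIntegrable 0 x)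
      (hBabs.stronglyMeasurableAtFilter volume (nhds x)) hBabs.continuousAt
  have hu₂cont : Continuous u₂ := by
    rw [continuous_iff_continuousAt]; exact fun x => (hu₂ x).continuousAt
  have hw₂cont : Continuous w₂ := by
    rw [continuous_iff_continuousAt]; exact fun x => (hw₂ x).continuousAt
  have hptwise : ∀ x ∈ Icc (0:ℝ) 1, N * |f x| ≤ u₂ x + (w₂ 1 - w₂ x) := by
    intro x hx
    have h1 : |u₁ x| ≤ u₂ x := by
      calc |u₁ x| ≤ ∫ t in (0:ℝ)..x, |h t * A t| :=
            intervalIntegral.abs_integral_le_integral_abs hx.1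
        _ = u₂ x := by
            apply intervalIntegral.integral_congr
            intro t ht
            rw [uIcc_of_le hx.1] at ht
            simp only [abs_mul, abs_of_nonneg (hAnn t ht.1)]
    have hw1x : w₂ 1 - w₂ x = ∫ t in x..(1:ℝ), |h t| * B t := by
      have := integral_add_adjacent_intervals (hBabs.intervalIntegrable (μ := volume) 0 x)
        (hBabs.intervalIntegrable (μ := volume) x 1)
      simp only [hw₂_def]; linarith [this]
    have hw1x' : w₁ 1 - w₁ x = ∫ t in x..(1:ℝ), h t * B t := by
      have := integral_add_adjacent_intervals (hhBint 0 x) (hhBint x 1)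
      simp only [hw₁_def]; linarith [this]
    have h2 : |w₁ 1 - w₁ x| ≤ w₂ 1 - w₂ x := by
      rw [hw1x, hw1x']
      calc |∫ t in x..(1:ℝ), h t * B t| ≤ ∫ t in x..(1:ℝ), |h t * B t| :=
            intervalIntegral.abs_integral_le_integral_abs hx.2
        _ = ∫ t in x..(1:ℝ), |h t| * B t := by
            apply intervalIntegral.integral_congr
            intro t ht
            rw [uIcc_of_le hx.2] at ht
            simp only [abs_mul, abs_of_nonneg (hBnn t ht.2)]
    have := hident x hx
    calc N * |f x| = |N * f x| := by
          rw [abs_mul, abs_of_nonneg hNpos.le]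
      _ = |u₁ x - (w₁ 1 - w₁ x)| := by rw [this]; ring_nf
      _ ≤ |u₁ x| + |w₁ 1 - w₁ x| := abs_sub _ _
      _ ≤ u₂ x + (w₂ 1 - w₂ x) := add_le_add h1 h2
  -- integrate the pointwise bound against g
  have hstep1 : N * (∫ x in (0:ℝ)..1, |f x| * g x)
      ≤ 2 * ∫ t in (0:ℝ)..1, |h t| * A t * B t := by
    have hmono : (∫ x in (0:ℝ)..1, N * (|f x| * g x))
        ≤ ∫ x in (0:ℝ)..1, (u₂ x + (w₂ 1 - w₂ x)) * g x := by
      apply intervalIntegral.integral_mono_on zero_le_one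
      · apply ContinuousOn.intervalIntegrable
        rw [uIcc_of_le zero_le_one]
        exact continuousOn_const.mul ((hfcont.abs).mul hgcont.continuousOn)
      · exact (((hu₂cont.add (continuous_const.sub hw₂cont))).mul hgcont).intervalIntegrable 0 1
      · intro x hx
        have := hptwise x hx
        have hgx := (hgpos x).le
        calc N * (|f x| * g x) = (N * |f x|) * g x := by ring
          _ ≤ (u₂ x + (w₂ 1 - w₂ x)) * g x := mul_le_mul_of_nonneg_right this hgx
    have hexp : (∫ x in (0:ℝ)..1, (u₂ x + (w₂ 1 - w₂ x)) * g x)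
        = 2 * ∫ t in (0:ℝ)..1, |h t| * A t * B t := by
      have J1 : IntervalIntegrable (fun x => u₂ x * g x) volume 0 1 :=
        (hu₂cont.mul hgcont).intervalIntegrable 0 1
      have J2 : IntervalIntegrable (fun x => w₂ 1 * g x) volume 0 1 :=
        (continuous_const.mul hgcont).intervalIntegrable 0 1
      have J3 : IntervalIntegrable (fun x => w₂ x * g x) volume 0 1 :=
        (hw₂cont.mul hgcont).intervalIntegrable 0 1
      have J12 : IntervalIntegrable (fun x => u₂ x * g x + w₂ 1 * g x) volume 0 1 := J1.add J2
      have e0 : (∫ x in (0:ℝ)..1, (u₂ x + (w₂ 1 - w₂ x)) * g x)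
          = ∫ x in (0:ℝ)..1, (u₂ x * g x + w₂ 1 * g x - w₂ x * g x) := by
        apply intervalIntegral.integral_congr
        intro x _
        ring
      have eg : (∫ x in (0:ℝ)..1, g x) = N := rfl
      have ew : (∫ t in (0:ℝ)..1, |h t| * B t) = w₂ 1 := rfl
      rw [e0, intervalIntegral.integral_sub J12 J3, intervalIntegral.integral_add J1 J2,
        intervalIntegral.integral_const_mul, eg, key (fun t => |h t|) habscont,
        key2 (fun t => |h t|) habscont, ew]
      ring
    calc N * (∫ x in (0:ℝ)..1, |f x| * g x)
        = ∫ x in (0:ℝ)..1, N * (|f x| * g x) := by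
          rw [intervalIntegral.integral_const_mul]
      _ ≤ ∫ x in (0:ℝ)..1, (u₂ x + (w₂ 1 - w₂ x)) * g x := hmono
      _ = 2 * ∫ t in (0:ℝ)..1, |h t| * A t * B t := hexp
  -- bound 2 A B ≤ C N g pointwise from hC
  have hAB_bound : ∀ t ∈ Icc (0:ℝ) 1, 2 * (A t * B t) ≤ C * N * g t := by
    intro t ht
    have hmem : (2 / ν t) * ((∫ z in (0:ℝ)..t, ν z) * (∫ z in t..1, ν z))
        / (∫ z in (0:ℝ)..1, ν z) ≤ C := hC.2 ⟨t, ht, rfl⟩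
    have eA : (∫ z in (0:ℝ)..t, ν z) = A t := by
      apply intervalIntegral.integral_congr
      intro z hz
      exact (hgeq z (uIcc_subset_Icc (left_mem_Icc.mpr zero_le_one) ht hz)).symm
    have eB : (∫ z in t..1, ν z) = B t := by
      apply intervalIntegral.integral_congr
      intro z hz
      exact (hgeq z (uIcc_subset_Icc ht (right_mem_Icc.mpr zero_le_one) hz)).symm
    have eN : (∫ z in (0:ℝ)..1, ν z) = N := by
      apply intervalIntegral.integral_congr
      intro z hz
      rw [uIcc_of_le zero_le_one] at hz
      exact (hgeq z hz).symm
    rw [eA, eB, eN, ← hgeq t ht] at hmem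
    have hgt := hgpos t
    have h1 : (2 / g t) * (A t * B t) ≤ C * N := (div_le_iff₀ hNpos).mp hmem
    have h2 : 2 * (A t * B t) / g t ≤ C * N := by
      rwa [div_mul_eq_mul_div] at h1
    calc 2 * (A t * B t) = 2 * (A t * B t) / g t * g t := by field_simp
      _ ≤ C * N * g t := mul_le_mul_of_nonneg_right h2 hgt.le
  have hstep2 : 2 * (∫ t in (0:ℝ)..1, |h t| * A t * B t)
      ≤ C * N * ∫ t in (0:ℝ)..1, |h t| * g t := by
    rw [← intervalIntegral.integral_const_mul, ← intervalIntegral.integral_const_mul]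
    apply intervalIntegral.integral_mono_on zero_le_one
    · exact (continuous_const.mul ((hAabs.mul hBcont))).intervalIntegrable 0 1
    · exact (continuous_const.mul (habscont.mul hgcont)).intervalIntegrable 0 1
    · intro t ht
      have := hAB_bound t ht
      have habs := abs_nonneg (h t)
      calc 2 * (|h t| * A t * B t) = |h t| * (2 * (A t * B t)) := by ring
        _ ≤ |h t| * (C * N * g t) := mul_le_mul_of_nonneg_left this habs
        _ = C * N * (|h t| * g t) := by ring
  -- convert the statement's integrals to g, and conclude
  have eL : (∫ x in (0:ℝ)..1, |f x| * ν x) = ∫ x in (0:ℝ)..1, |f x| * g x := by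
    apply intervalIntegral.integral_congr
    intro x hx
    rw [uIcc_of_le zero_le_one] at hx
    simp only [hgeq x hx]
  have eR : (∫ x in (0:ℝ)..1, |f' x| * ν x) = ∫ x in (0:ℝ)..1, |h x| * g x := by
    apply intervalIntegral.integral_congr
    intro x hx
    rw [uIcc_of_le zero_le_one] at hx
    simp only [hgeq x hx, hheq x hx]
  rw [eL, eR]
  have final : N * (∫ x in (0:ℝ)..1, |f x| * g x)
      ≤ N * (C * ∫ x in (0:ℝ)..1, |h x| * g x) := by
    calc N * (∫ x in (0:ℝ)..1, |f x| * g x)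
        ≤ 2 * ∫ t in (0:ℝ)..1, |h t| * A t * B t := hstep1
      _ ≤ C * N * ∫ t in (0:ℝ)..1, |h t| * g t := hstep2
      _ = N * (C * ∫ x in (0:ℝ)..1, |h x| * g x) := by ring
  exact le_of_mul_le_mul_left final hNpos
end

section
/- Let Ω = (0,1) × (0,ε) ⊂ ℝ² and let u_δ be a smooth approximation (mollification at scale δ) of the function (x,y) ↦ χ_{[0,1/2]}(x) − χ_{(1/2,1]}(x). Then as δ → 0, ‖u_δ‖_{L¹(Ω)} → ε and ‖∇u_δ‖_{L¹(Ω)} → 2ε; hence the ratio ‖u‖_{L¹}/‖∇u‖_{L¹} over mean-zero functions on Ω can be made arbitrarily close to 1/2, while diam(Ω) = √(1+ε²). -/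
/-!
The diameter is attained in the limit by the two opposite corners, which lie in the closure of
the rectangle. For the ratio, take `u(x, y) = s_δ(x - 1/2)` with `s_δ` a smooth monotone odd
profile equal to `-1` on `(-∞, -δ]` and to `1` on `[δ, ∞)`. Oddness gives mean zero, the
`L¹` norm of `u` differs from `ε` only on the strip `|x - 1/2| < δ`, and since `s_δ` is monotone
the `L¹` norm of `∇u` is exactly `ε` times the total variation `s_δ(1/2) - s_δ(-1/2) = 2`.
-/

open MeasureTheory Set

theorem Real.smoothTransition.one_sub (x : ℝ) :
    smoothTransition (1 - x) = 1 - smoothTransition x := by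
  have := pos_denom x
  simp only [smoothTransition, sub_sub_cancel]
  rw [add_comm (expNegInvGlue (1 - x)) (expNegInvGlue x)]
  field_simp
  ring

theorem integral_Ioo_comp_sub (g : ℝ → ℝ) {a b : ℝ} (hab : a ≤ b) (c : ℝ) :
    ∫ x in Ioo a b, g (x - c) = ∫ x in a - c..b - c, g x := by
  rw [← integral_Ioc_eq_integral_Ioo, ← intervalIntegral.integral_of_le hab,
    intervalIntegral.integral_comp_sub_right]

theorem EuclideanSpace.norm_proj {𝕜 ι : Type*} [RCLike 𝕜] [Fintype ι] [DecidableEq ι] (i : ι) :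
    ‖(EuclideanSpace.proj i : EuclideanSpace 𝕜 ι →L[𝕜] 𝕜)‖ = 1 := by
  refine le_antisymm (ContinuousLinearMap.opNorm_le_bound _ zero_le_one fun p => ?_) ?_
  · simpa using PiLp.norm_apply_le p i
  · simpa [PiLp.norm_single] using
      (EuclideanSpace.proj i : EuclideanSpace 𝕜 ι →L[𝕜] 𝕜).le_opNorm (EuclideanSpace.single i 1)

theorem norm_fderiv_comp_apply {ι : Type*} [Fintype ι] [DecidableEq ι] {f : ℝ → ℝ} (i : ι)
    {p : EuclideanSpace ℝ ι} (hf : DifferentiableAt ℝ f (p i)) :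
    ‖fderiv ℝ (fun q : EuclideanSpace ℝ ι => f (q i)) p‖ = |deriv f (p i)| := by
  have hu : HasFDerivAt (fun q : EuclideanSpace ℝ ι => f (q i))
      (deriv f (p i) • (EuclideanSpace.proj i : EuclideanSpace ℝ ι →L[ℝ] ℝ)) p :=
    hf.hasDerivAt.comp_hasFDerivAt p (EuclideanSpace.proj (𝕜 := ℝ) i).hasFDerivAt
  rw [hu.fderiv, norm_smul, EuclideanSpace.norm_proj, Real.norm_eq_abs, mul_one]

theorem setIntegral_comp_apply_zero (g : ℝ → ℝ) (s t : Set ℝ) :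
    ∫ p in {p : EuclideanSpace ℝ (Fin 2) | p 0 ∈ s ∧ p 1 ∈ t}, g (p 0) =
      (∫ x in s, g x) * volume.real t := by
  let e := (MeasurableEquiv.toLp 2 (Fin 2 → ℝ)).symm.trans MeasurableEquiv.finTwoArrow
  have he : MeasurePreserving e := (volume_preserving_finTwoArrow ℝ).comp
    (EuclideanSpace.volume_preserving_symm_measurableEquiv_toLp (Fin 2))
  have := he.setIntegral_preimage_emb e.measurableEmbedding (fun z : ℝ × ℝ => g z.1 * 1) (s ×ˢ t)
  rw [Measure.volume_eq_prod, setIntegral_prod_mul g (fun _ => (1 : ℝ)) s t] at this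
  simp only [mul_one, setIntegral_const, smul_eq_mul] at this
  exact this

theorem diam_rectangle {a b c d : ℝ} (hab : a < b) (hcd : c < d) :
    Metric.diam {p : EuclideanSpace ℝ (Fin 2) | p 0 ∈ Ioo a b ∧ p 1 ∈ Ioo c d} =
      √((b - a) ^ 2 + (d - c) ^ 2) := by
  set Ω := {p : EuclideanSpace ℝ (Fin 2) | p 0 ∈ Ioo a b ∧ p 1 ∈ Ioo c d}
  have hdist : ∀ p ∈ Ω, ∀ q ∈ Ω, dist p q ≤ √((b - a) ^ 2 + (d - c) ^ 2) := by
    rintro p ⟨⟨hp0, hp0'⟩, hp1, hp1'⟩ q ⟨⟨hq0, hq0'⟩, hq1, hq1'⟩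
    rw [EuclideanSpace.dist_eq, Fin.sum_univ_two, Real.dist_eq, Real.dist_eq, sq_abs, sq_abs]
    exact Real.sqrt_le_sqrt (by nlinarith)
  have hbdd : Bornology.IsBounded Ω := Metric.isBounded_iff.2 ⟨_, hdist⟩
  refine le_antisymm (Metric.diam_le_of_forall_dist_le (Real.sqrt_nonneg _) hdist) ?_
  have hsegment : openSegment ℝ !₂[a, c] !₂[b, d] ⊆ Ω := by
    rintro _ ⟨s, t, hs, ht, hst, rfl⟩
    obtain rfl := eq_sub_of_add_eq hst
    refine ⟨⟨?_, ?_⟩, ?_, ?_⟩ <;> simp <;> nlinarith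
  have hcorner := segment_subset_closure_openSegment.trans (closure_mono hsegment)
  calc √((b - a) ^ 2 + (d - c) ^ 2) = dist !₂[b, d] !₂[a, c] := by
        simp [EuclideanSpace.dist_eq, Real.dist_eq, sq_abs]
    _ ≤ Metric.diam (closure Ω) := Metric.dist_le_diam_of_mem hbdd.closure
        (hcorner (right_mem_segment ℝ _ _)) (hcorner (left_mem_segment ℝ _ _))
    _ = Metric.diam Ω := Metric.diam_closure Ω

noncomputable def smoothSign (δ x : ℝ) : ℝ :=
  2 * Real.smoothTransition ((x + δ) / (2 * δ)) - 1

namespace smoothSign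

variable {δ : ℝ}

theorem contDiff {n : ℕ∞} : ContDiff ℝ n (smoothSign δ) :=
  (contDiff_const.mul (Real.smoothTransition.contDiff.comp
    ((contDiff_id.add contDiff_const).div_const _))).sub contDiff_const

theorem abs_le_one (x : ℝ) : |smoothSign δ x| ≤ 1 := by
  have := Real.smoothTransition.nonneg ((x + δ) / (2 * δ))
  have := Real.smoothTransition.le_one ((x + δ) / (2 * δ))
  rw [smoothSign, abs_le]
  constructor <;> linarith

variable (hδ : 0 < δ)
include hδ

theorem monotone : Monotone (smoothSign δ) := fun x y hxy => by
  have := Real.smoothTransition.monotone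
    (div_le_div_of_nonneg_right (by linarith : x + δ ≤ y + δ) (by positivity : 0 ≤ 2 * δ))
  simp only [smoothSign]
  linarith

theorem eq_neg_one {x : ℝ} (hx : x ≤ -δ) : smoothSign δ x = -1 := by
  rw [smoothSign, Real.smoothTransition.zero_of_nonpos
    (div_nonpos_of_nonpos_of_nonneg (by linarith) (by linarith))]
  ring

theorem eq_one {x : ℝ} (hx : δ ≤ x) : smoothSign δ x = 1 := by
  rw [smoothSign, Real.smoothTransition.one_of_one_le ((one_le_div (by positivity)).2 (by linarith))]
  ring

theorem neg (x : ℝ) : smoothSign δ (-x) = -smoothSign δ x := by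
  have harg : (-x + δ) / (2 * δ) = 1 - (x + δ) / (2 * δ) := by field_simp; ring
  rw [smoothSign, smoothSign, harg, Real.smoothTransition.one_sub]
  ring

theorem integral_eq_zero (r : ℝ) : ∫ x in -r..r, smoothSign δ x = 0 := by
  have h := intervalIntegral.integral_comp_neg (a := -r) (b := r) (smoothSign δ)
  simp only [neg_neg, smoothSign.neg hδ, intervalIntegral.integral_neg] at h
  linarith

theorem integral_abs_deriv {r : ℝ} (hr : δ ≤ r) :
    ∫ x in -r..r, |deriv (smoothSign δ) x| = 2 := by
  have hdiff : Differentiable ℝ (smoothSign δ) := contDiff.differentiable (n := 1) one_ne_zero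
  simp only [abs_of_nonneg ((smoothSign.monotone hδ).deriv_nonneg)]
  rw [intervalIntegral.integral_deriv_eq_sub (fun x _ => hdiff x)
    ((contDiff.continuous_deriv (n := 1) le_rfl).intervalIntegrable _ _),
    eq_one hδ hr, eq_neg_one hδ (by linarith)]
  norm_num

theorem abs_integral_abs_sub_le {r : ℝ} (hr : δ ≤ r) :
    |(∫ x in -r..r, |smoothSign δ x|) - 2 * r| ≤ 2 * δ := by
  have hint : ∀ a b : ℝ, IntervalIntegrable (fun x => |smoothSign δ x|) volume a b :=
    fun a b => (contDiff (n := 0)).continuous.abs.intervalIntegrable a b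
  have hflat : ∀ a b, a ≤ b → (∀ x ∈ Icc a b, |smoothSign δ x| = 1) →
      ∫ x in a..b, |smoothSign δ x| = b - a := fun a b hab h => by
    rw [intervalIntegral.integral_congr (g := fun _ => (1 : ℝ)) (by rwa [uIcc_of_le hab])]
    simp
  have hleft := hflat (-r) (-δ) (by linarith) fun x hx => by
    rw [eq_neg_one hδ hx.2, abs_neg, abs_one]
  have hright := hflat δ r hr fun x hx => by rw [eq_one hδ hx.1, abs_one]
  have hmid_nonneg : 0 ≤ ∫ x in -δ..δ, |smoothSign δ x| :=
    intervalIntegral.integral_nonneg (by linarith) fun x _ => abs_nonneg _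
  have hmid_le : ∫ x in -δ..δ, |smoothSign δ x| ≤ 2 * δ := by
    calc ∫ x in -δ..δ, |smoothSign δ x| ≤ ∫ _ in -δ..δ, (1 : ℝ) :=
          intervalIntegral.integral_mono_on (by linarith) (hint _ _) intervalIntegrable_const
            fun x _ => abs_le_one x
      _ = 2 * δ := by simp; ring
  rw [← intervalIntegral.integral_add_adjacent_intervals (hint (-r) (-δ)) (hint (-δ) r),
    ← intervalIntegral.integral_add_adjacent_intervals (hint (-δ) δ) (hint δ r), hleft, hright,
    abs_le]
  constructor <;> linarith

end smoothSign

/-- Sharpness of the Acosta–Durán constant 1/2 on the thin rectangle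
`Ω = (0,1) × (0,ε)`: its diameter is `√(1+ε²)`, and there are mean-zero C¹
functions (mollified step functions) whose `L¹` norm is arbitrarily close to `ε`
while the `L¹` norm of the gradient is arbitrarily close to `2ε`. -/
theorem stmt_12 (ε : ℝ) (hε : 0 < ε)
    (Ω : Set (EuclideanSpace ℝ (Fin 2)))
    (hΩ : Ω = {p | p 0 ∈ Ioo (0:ℝ) 1 ∧ p 1 ∈ Ioo (0:ℝ) ε}) :
    Metric.diam Ω = Real.sqrt (1 + ε ^ 2) ∧
    ∀ η > 0, ∃ u : EuclideanSpace ℝ (Fin 2) → ℝ,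
      ContDiff ℝ 1 u ∧
      (∫ x in Ω, u x) = 0 ∧
      |(∫ x in Ω, |u x|) - ε| < η ∧
      |(∫ x in Ω, ‖fderiv ℝ u x‖) - 2 * ε| < η := by
  subst hΩ
  refine ⟨by simpa using diam_rectangle zero_lt_one hε, fun η hη => ?_⟩
  obtain ⟨δ, hδ, hδ_le, hδη⟩ : ∃ δ, 0 < δ ∧ δ ≤ 1 / 2 ∧ 2 * δ * ε < η :=
    ⟨min (1 / 2) (η / (4 * ε)), by positivity, min_le_left _ _, by
      have := mul_le_mul_of_nonneg_right (min_le_right (1 / 2) (η / (4 * ε))) hε.le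
      field_simp at this
      linarith⟩
  have hfubini : ∀ g : ℝ → ℝ, ∫ p in {p : EuclideanSpace ℝ (Fin 2) | p 0 ∈ Ioo (0:ℝ) 1 ∧
      p 1 ∈ Ioo (0:ℝ) ε}, g (p 0 - 1 / 2) = (∫ x in -(1 / 2)..1 / 2, g x) * ε := fun g => by
    rw [setIntegral_comp_apply_zero (fun x => g (x - 1 / 2)), integral_Ioo_comp_sub g zero_le_one,
      Real.volume_real_Ioo_of_le hε.le]
    norm_num
  have hgrad : ∀ p : EuclideanSpace ℝ (Fin 2),
      ‖fderiv ℝ (fun q : EuclideanSpace ℝ (Fin 2) => smoothSign δ (q 0 - 1 / 2)) p‖ =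
        |deriv (smoothSign δ) (p 0 - 1 / 2)| := fun p => by
    rw [← deriv_comp_sub_const]
    exact norm_fderiv_comp_apply (f := fun x => smoothSign δ (x - 1 / 2)) 0
      (differentiableAt_comp_sub_const.2
        ((smoothSign.contDiff (n := 1)).differentiable one_ne_zero _))
  refine ⟨fun p => smoothSign δ (p 0 - 1 / 2),
    (smoothSign.contDiff (n := 1)).comp (by fun_prop), ?_, ?_, ?_⟩
  · rw [hfubini, smoothSign.integral_eq_zero hδ, zero_mul]
  · rw [hfubini (fun x => |smoothSign δ x|), ← sub_one_mul, abs_mul, abs_of_pos hε]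
    have := smoothSign.abs_integral_abs_sub_le hδ hδ_le
    rw [mul_one_div_cancel two_ne_zero] at this
    exact (mul_le_mul_of_nonneg_right this hε.le).trans_lt hδη
  · simp only [hgrad]
    rw [hfubini (fun x => |deriv (smoothSign δ) x|), smoothSign.integral_abs_deriv hδ hδ_le]
    simpa using hη
end

section
/- Let ν : [0,1] → ℝ be continuous and strictly positive, and suppose the maximum of x ↦ (1/ν(x)) ∫ₓ¹ ν(z) dz over [0,1] is attained at a unique point x₀ ∈ (0,1). Then for every ε > 0 there exists δ > 0 such that any increasing function g with g(0)=0 satisfying ∫₀¹ g ν ≥ (1−δ) C ∫₀¹ ν dg (with C the maximum value) has its Stieltjes measure dg concentrated, up to fraction ε of its total mass, on the set A_ε = {z : (1/ν(z))∫_z¹ ν ≥ (1−ε) C}. -/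
/-!
Write `F z = ∫_z^1 ν`. Since `g x = dg (0, x]`, Fubini turns `∫₀¹ g ν` into `∫ F dg`, and the
definition of `C` says `F ≤ C ν` on `[0,1]`. For a near-extremizer the deficit therefore satisfies
`∫ (C ν - F) dg ≤ δ C ∫ ν dg ≤ δ C (max ν) dg[0,1]`, while on the set where `F < (1 - ε) C ν`
the deficit is at least `ε C (min ν)`. Markov's inequality concludes, with
`δ = ε² (min ν) / (max ν)`.
-/

open MeasureTheory Set intervalIntegral

theorem StieltjesFunction.integral_sub_mul_eq_setIntegral_integral (g : StieltjesFunction ℝ)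
    {ν : ℝ → ℝ} {a b : ℝ} (hab : a ≤ b) (hν : IntegrableOn ν (Ioc a b)) :
    ∫ x in a..b, (g x - g a) * ν x = ∫ z in Ioc a b, (∫ x in z..b, ν x) ∂g.measure := by
  have : IsFiniteMeasure (g.measure.restrict (Ioc a b)) :=
    isFiniteMeasure_restrict.mpr measure_Ioc_lt_top.ne
  have hK : Integrable (Function.uncurry fun x z => (Iic x).indicator (fun _ => ν x) z)
      ((volume.restrict (Ioc a b)).prod (g.measure.restrict (Ioc a b))) := by
    have hS : MeasurableSet {p : ℝ × ℝ | p.2 ≤ p.1} :=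
      measurableSet_le measurable_snd measurable_fst
    refine ((hν.comp_fst _).indicator hS).congr (ae_of_all _ fun p => ?_)
    simp [indicator, Function.uncurry]
  have h_inner_left : ∀ x ∈ Ioc a b,
      ∫ z in Ioc a b, (Iic x).indicator (fun _ => ν x) z ∂g.measure = (g x - g a) * ν x := by
    intro x hx
    rw [MeasureTheory.integral_indicator measurableSet_Iic,
      Measure.restrict_restrict measurableSet_Iic, setIntegral_const, Iic_inter_Ioc_of_le hx.2,
      measureReal_def, g.measure_Ioc,
      ENNReal.toReal_ofReal (sub_nonneg.mpr (g.mono hx.1.le)), smul_eq_mul]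
  have h_inner_right : ∀ z ∈ Ioc a b,
      ∫ x in Ioc a b, (Iic x).indicator (fun _ => ν x) z = ∫ x in z..b, ν x := by
    intro z hz
    have hind : ∀ x, (Iic x).indicator (fun _ => ν x) z = (Ici z).indicator ν x := fun x => by
      simp [indicator]
    have hset : Ici z ∩ Ioc a b = Icc z b :=
      Set.ext fun x => ⟨fun h => ⟨h.1, h.2.2⟩, fun h => ⟨h.1, hz.1.trans_le h.1, h.2⟩⟩
    simp_rw [hind]
    rw [MeasureTheory.integral_indicator measurableSet_Ici,
      Measure.restrict_restrict measurableSet_Ici, hset, integral_Icc_eq_integral_Ioc,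
      integral_of_le hz.2]
  rw [integral_of_le hab, ← setIntegral_congr_fun measurableSet_Ioc h_inner_left,
    integral_integral_swap hK]
  exact setIntegral_congr_fun measurableSet_Ioc h_inner_right

theorem measure_ratio_lt_le_of_integral_ge {α : Type*} [MeasurableSpace α] {μ : Measure α}
    {s : Set α} (hs : MeasurableSet s) (hμs : μ s ≠ ⊤) {f w : α → ℝ}
    (hf : IntegrableOn f s μ) (hw : IntegrableOn w s μ) {m M C ε : ℝ} (hm : 0 < m)
    (hwm : ∀ z ∈ s, m ≤ w z) (hwM : ∀ z ∈ s, w z ≤ M) (hC : 0 < C)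
    (hfC : ∀ z ∈ s, 1 / w z * f z ≤ C) (hε : 0 < ε)
    (hint : (1 - ε ^ 2 * m / M) * C * ∫ z in s, w z ∂μ ≤ ∫ z in s, f z ∂μ) :
    μ {z ∈ s | 1 / w z * f z < (1 - ε) * C} ≤ ENNReal.ofReal ε * μ s := by
  rcases s.eq_empty_or_nonempty with rfl | ⟨z₀, hz₀⟩
  · simp
  have hM : 0 < M := hm.trans_le ((hwm z₀ hz₀).trans (hwM z₀ hz₀))
  set B := {z ∈ s | 1 / w z * f z < (1 - ε) * C}
  have hB : μ B ≠ ⊤ := ne_top_of_le_ne_top hμs (measure_mono (sep_subset _ _))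
  have hdef_nonneg : ∀ z ∈ s, 0 ≤ C * w z - f z := fun z hz => by
    have := hfC z hz
    rw [one_div, inv_mul_le_iff₀ (hm.trans_le (hwm z hz))] at this
    linarith
  have hB_sub : B ⊆ {z | ε * C * m ≤ C * w z - f z} ∩ s := by
    rintro z ⟨hz, hlt⟩
    have hw_pos := hm.trans_le (hwm z hz)
    rw [one_div, inv_mul_lt_iff₀ hw_pos] at hlt
    refine ⟨show ε * C * m ≤ C * w z - f z from ?_, hz⟩
    linarith [mul_le_mul_of_nonneg_left (hwm z hz) (mul_pos hε hC).le]
  have hmarkov := mul_meas_ge_le_integral_of_nonneg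
    ((ae_restrict_iff' hs).mpr (ae_of_all _ hdef_nonneg)) ((hw.const_mul C).sub hf) (ε * C * m)
  rw [measureReal_restrict_apply' hs, integral_sub (hw.const_mul C) hf,
    MeasureTheory.integral_const_mul] at hmarkov
  have hw_le : ∫ z in s, w z ∂μ ≤ M * μ.real s := by
    have := setIntegral_mono_on hw (integrableOn_const hμs) hs hwM
    rwa [setIntegral_const, smul_eq_mul, mul_comm] at this
  have hB_real : μ.real B ≤ ε * μ.real s := by
    have hmono : μ.real B ≤ μ.real ({z | ε * C * m ≤ C * w z - f z} ∩ s) :=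
      measureReal_mono hB_sub (measure_ne_top_of_subset inter_subset_right hμs)
    have key : ε * C * m * μ.real B ≤ ε * C * m * (ε * μ.real s) := by
      calc ε * C * m * μ.real B ≤ C * ∫ z in s, w z ∂μ - ∫ z in s, f z ∂μ :=
            (mul_le_mul_of_nonneg_left hmono (by positivity)).trans hmarkov
        _ ≤ ε ^ 2 * m / M * C * (M * μ.real s) := by
            linarith [mul_le_mul_of_nonneg_left hw_le (by positivity : 0 ≤ ε ^ 2 * m / M * C)]
        _ = ε * C * m * (ε * μ.real s) := by field_simp
    exact le_of_mul_le_mul_left key (by positivity)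
  calc μ B = ENNReal.ofReal (μ.real B) := (ENNReal.ofReal_toReal hB).symm
    _ ≤ ENNReal.ofReal (ε * μ.real s) := ENNReal.ofReal_le_ofReal hB_real
    _ = ENNReal.ofReal ε * μ s := by
        rw [ENNReal.ofReal_mul hε.le, measureReal_def, ENNReal.ofReal_toReal hμs]

theorem stmt_13_general (ν : ℝ → ℝ)
    (hν : ContinuousOn ν (Icc 0 1)) (hνpos : ∀ x ∈ Icc (0:ℝ) 1, 0 < ν x)
    (C : ℝ)
    (hC : IsGreatest ((fun x => (1 / ν x) * ∫ z in x..1, ν z) '' Icc 0 1) C)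
    (ε : ℝ) (hε : 0 < ε) :
    ∃ δ > 0, ∀ g : StieltjesFunction ℝ, g 0 = 0 →
      (∫ x in (0:ℝ)..1, g x * ν x) ≥
        (1 - δ) * C * (∫ z in Icc (0:ℝ) 1, ν z ∂g.measure) →
      g.measure {z ∈ Icc (0:ℝ) 1 | (1 / ν z) * (∫ y in z..1, ν y) < (1 - ε) * C} ≤
        ENNReal.ofReal ε * g.measure (Icc (0:ℝ) 1) := by
  have hI : (0:ℝ) ≤ 1 := zero_le_one
  have hνint : IntegrableOn ν (Icc 0 1) := hν.integrableOn_compact isCompact_Icc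
  obtain ⟨a, ha, hmin⟩ := isCompact_Icc.exists_isMinOn (nonempty_Icc.mpr hI) hν
  obtain ⟨b, hb, hmax⟩ := isCompact_Icc.exists_isMaxOn (nonempty_Icc.mpr hI) hν
  have hC_pos : 0 < C := by
    have hF0 : 0 < ∫ z in (0:ℝ)..1, ν z := intervalIntegral_pos_of_pos_on
      (hν.intervalIntegrable_of_Icc hI) (fun z hz => hνpos z (Ioo_subset_Icc_self hz)) one_pos
    have := hνpos 0 (left_mem_Icc.mpr hI)
    exact (by positivity : 0 < 1 / ν 0 * ∫ z in (0:ℝ)..1, ν z).trans_le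
      (hC.2 ⟨0, left_mem_Icc.mpr hI, rfl⟩)
  refine ⟨ε ^ 2 * ν a / ν b, by have := hνpos a ha; have := hνpos b hb; positivity,
    fun g hg0 hgν => ?_⟩
  have hF_cont : ContinuousOn (fun z => ∫ y in z..1, ν y) (Icc 0 1) := by
    rw [← uIcc_of_le hI] at hνint ⊢
    exact continuousOn_primitive_interval_left hνint
  have hF_nonneg : ∀ z ∈ Icc (0:ℝ) 1, 0 ≤ ∫ y in z..1, ν y := fun z hz =>
    integral_nonneg hz.2 fun y hy => (hνpos y ⟨hz.1.trans hy.1, hy.2⟩).le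
  refine measure_ratio_lt_le_of_integral_ge measurableSet_Icc measure_Icc_lt_top.ne
    (hF_cont.integrableOn_compact isCompact_Icc) (hν.integrableOn_compact isCompact_Icc)
    (hνpos a ha) (fun z hz => hmin hz) (fun z hz => hmax hz) hC_pos
    (fun z hz => hC.2 ⟨z, hz, rfl⟩) hε ?_
  calc _ ≤ ∫ x in (0:ℝ)..1, (g x - g 0) * ν x := by simpa only [hg0, sub_zero] using hgν
    _ = ∫ z in Ioc (0:ℝ) 1, (∫ y in z..1, ν y) ∂g.measure :=
      g.integral_sub_mul_eq_setIntegral_integral hI (hνint.mono_set Ioc_subset_Icc_self)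
    _ ≤ ∫ z in Icc (0:ℝ) 1, (∫ y in z..1, ν y) ∂g.measure :=
      setIntegral_mono_set (hF_cont.integrableOn_compact isCompact_Icc)
        ((ae_restrict_iff' measurableSet_Icc).mpr (ae_of_all _ hF_nonneg))
        Ioc_subset_Icc_self.eventuallyLE

/-- Near-extremizers of the weighted L¹ Poincaré inequality: if the isoperimetric
ratio `(1/ν(x))∫ₓ¹ ν` has a unique maximum point `x₀ ∈ (0,1)` with maximal value
`C`, then for every `ε > 0` there is `δ > 0` such that every increasing
right-continuous `g` with `g 0 = 0` satisfying
`∫₀¹ g ν ≥ (1-δ) C ∫₀¹ ν dg` has all but an `ε`-fraction of the mass of its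
Stieltjes measure `dg` on the set where the ratio exceeds `(1-ε) C`. -/
theorem stmt_13 (ν : ℝ → ℝ)
    (hν : ContinuousOn ν (Icc 0 1)) (hνpos : ∀ x ∈ Icc (0:ℝ) 1, 0 < ν x)
    (C : ℝ)
    (hC : IsGreatest ((fun x => (1 / ν x) * ∫ z in x..1, ν z) '' Icc 0 1) C)
    (x₀ : ℝ) (hx₀ : x₀ ∈ Ioo (0:ℝ) 1)
    (hmax : (1 / ν x₀) * ∫ z in x₀..1, ν z = C)
    (huniq : ∀ x ∈ Icc (0:ℝ) 1, (1 / ν x) * (∫ z in x..1, ν z) = C → x = x₀)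
    (ε : ℝ) (hε : 0 < ε) :
    ∃ δ > 0, ∀ g : StieltjesFunction ℝ, g 0 = 0 →
      (∫ x in (0:ℝ)..1, g x * ν x) ≥
        (1 - δ) * C * (∫ z in Icc (0:ℝ) 1, ν z ∂g.measure) →
      g.measure {z ∈ Icc (0:ℝ) 1 | (1 / ν z) * (∫ y in z..1, ν y) < (1 - ε) * C} ≤
        ENNReal.ofReal ε * g.measure (Icc (0:ℝ) 1) :=
  stmt_13_general ν hν hνpos C hC ε hε
end
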